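/- arXiv:1604.01863 — 10 statements merged into one kernel-verified Lean document; each statement's English description precedes it below -/
import Mathlib

section
/- Suppose δ(∅) = 0 and δ(A) = f(|A| − 1) for all nonempty finite A ⊆ X, where f is a real-valued function on the nonnegative integers. If f satisfies (S1) f(0) = 0 and f(j) > 0 for j > 0, (S2) f is non-decreasing, and (S3) f(j + k) ≤ f(j) + f(k) for all j, k ≥ 0 with j + k < |X|, then (X, δ) is a diversity. -/
/-- If `f` satisfies (S1)–(S3) then `δ(A) = f(|A|−1)` (with `δ ∅ = 0`) is a diversity. -/
theorem stmt_2 {X : Type*} [DecidableEq X] [Fintype X]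
    (f : ℕ → ℝ) (δ : Finset X → ℝ)
    (hempty : δ ∅ = 0)
    (hδ : ∀ A : Finset X, A.Nonempty → δ A = f (A.card - 1))
    (hS1a : f 0 = 0) (hS1b : ∀ j, 0 < j → 0 < f j)
    (hS2 : ∀ j k, j ≤ k → f j ≤ f k)
    (hS3 : ∀ j k, j + k < Fintype.card X → f (j + k) ≤ f j + f k) :
    (∀ A : Finset X, 0 ≤ δ A) ∧
    (∀ A : Finset X, δ A = 0 ↔ A.card ≤ 1) ∧
    (∀ A B C : Finset X, B.Nonempty → δ (A ∪ C) ≤ δ (A ∪ B) + δ (B ∪ C)) := by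
  have hfnn : ∀ n, 0 ≤ f n := by
    intro n
    rcases Nat.eq_zero_or_pos n with h | h
    · simp [h, hS1a]
    · exact (hS1b n h).le
  have hnn : ∀ A : Finset X, 0 ≤ δ A := by
    intro A
    rcases A.eq_empty_or_nonempty with h | h
    · simp [h, hempty]
    · rw [hδ A h]; exact hfnn _
  refine ⟨hnn, ?_, ?_⟩
  · intro A
    rcases A.eq_empty_or_nonempty with h | h
    · simp [h, hempty]
    · rw [hδ A h]
      constructor
      · intro hz
        by_contra hc
        push_neg at hc
        have : 0 < A.card - 1 := by omega
        exact absurd hz (ne_of_gt (hS1b _ this))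
      · intro hc
        have : A.card - 1 = 0 := by omega
        simp [this, hS1a]
  · intro A B C hB
    have hAB : (A ∪ B).Nonempty := hB.mono Finset.subset_union_right
    have hBC : (B ∪ C).Nonempty := hB.mono Finset.subset_union_left
    rw [hδ _ hAB, hδ _ hBC]
    rcases (A ∪ C).eq_empty_or_nonempty with h | h
    · rw [h, hempty]
      linarith [hfnn ((A ∪ B).card - 1), hfnn ((B ∪ C).card - 1)]
    · rw [hδ _ h]
      set m := (A ∪ C).card - 1 with hm
      set j := (A ∪ B).card - 1 with hj
      set k := (B ∪ C).card - 1 with hk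
      have hcards : (A ∪ C).card ≤ (A ∪ B).card + (B ∪ C).card - B.card := by
        have h1 : (A ∪ C).card ≤ (A ∪ B ∪ (B ∪ C)).card :=
          Finset.card_le_card (by intro x hx; simp at hx ⊢; tauto)
        have h2 : (A ∪ B ∪ (B ∪ C)).card + ((A ∪ B) ∩ (B ∪ C)).card
            = (A ∪ B).card + (B ∪ C).card := Finset.card_union_add_card_inter _ _
        have h3 : B.card ≤ ((A ∪ B) ∩ (B ∪ C)).card :=
          Finset.card_le_card (by intro x hx; simp [hx])
        omega
      have hBpos : 1 ≤ B.card := Finset.card_pos.mpr hB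
      have hmjk : m ≤ j + k := by
        have := Finset.card_pos.mpr hAB
        have := Finset.card_pos.mpr hBC
        omega
      rcases le_or_gt m j with hmj | hmj
      · calc f m ≤ f j := hS2 _ _ hmj
          _ ≤ f j + f k := le_add_of_nonneg_right (hfnn k)
      · have hmlt : m < Fintype.card X := by
          have h1 := Finset.card_le_card (Finset.subset_univ (A ∪ C))
          have h2 := Finset.card_pos.mpr h
          have h3 : (Finset.univ : Finset X).card = Fintype.card X := Finset.card_univ
          omega
        have hmlt' : m < Fintype.card X := hmlt
        have : f m = f (j + (m - j)) := by congr 1; omega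
        rw [this]
        have h4 : f (j + (m - j)) ≤ f j + f (m - j) := by
          apply hS3
          omega
        have h5 : f (m - j) ≤ f k := hS2 _ _ (by omega)
        linarith
end

section
/- Suppose (X, δ) is a diversity with δ(A) = f(|A| − 1) for all nonempty finite A ⊆ X, where X is infinite or |X| ≥ j + k + 1. Then f satisfies: f(0) = 0, f(j) > 0 for j > 0, f is non-decreasing, and f(j + k) ≤ f(j) + f(k) for all j, k ≥ 0 with j + k < |X|. -/
/-!
A diversity vanishing on singletons is monotone: the triangle inequality through a point `b`
gives `δ A ≤ δ (A ∪ {b}) + δ {b} = δ (insert b A)`. Through a common point `b` of `A` and `C`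
it also gives `δ (A ∪ C) ≤ δ A + δ C`, and a set of size `j + k + 1` is the union of a set of
size `j + 1` and one of size `k + 1` sharing a single point, which yields subadditivity of `f`.
-/

section Diversity

variable {X : Type*} [DecidableEq X] {δ : Finset X → ℝ}

theorem le_insert_of_triangle
    (htri : ∀ A B C : Finset X, B.Nonempty → δ (A ∪ C) ≤ δ (A ∪ B) + δ (B ∪ C))
    {b : X} (hb : δ {b} = 0) (A : Finset X) : δ A ≤ δ (insert b A) := by
  simpa [hb, Finset.union_comm A {b}] using htri A {b} ∅ (Finset.singleton_nonempty b)

theorem monotone_of_triangle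
    (htri : ∀ A B C : Finset X, B.Nonempty → δ (A ∪ C) ≤ δ (A ∪ B) + δ (B ∪ C))
    (hsingle : ∀ b : X, δ {b} = 0) : Monotone δ := by
  intro A C hAC
  suffices h : ∀ D, δ A ≤ δ (A ∪ D) by simpa [Finset.union_eq_right.2 hAC] using h C
  intro D
  induction D using Finset.induction_on with
  | empty => simp
  | insert b D _ ih =>
    rw [Finset.union_insert]
    exact ih.trans (le_insert_of_triangle htri (hsingle b) _)

theorem union_le_add_of_triangle
    (htri : ∀ A B C : Finset X, B.Nonempty → δ (A ∪ C) ≤ δ (A ∪ B) + δ (B ∪ C))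
    {A C : Finset X} {b : X} (hbA : b ∈ A) (hbC : b ∈ C) : δ (A ∪ C) ≤ δ A + δ C := by
  simpa [Finset.union_comm A {b}, Finset.insert_eq_of_mem hbA, Finset.insert_eq_of_mem hbC]
    using htri A {b} C (Finset.singleton_nonempty b)

end Diversity

theorem Finset.exists_union_eq_of_card_eq_add {X : Type*} [DecidableEq X] {S : Finset X}
    {j k : ℕ} (hS : S.card = j + k + 1) :
    ∃ A C : Finset X, ∃ b ∈ A, b ∈ C ∧ A ∪ C = S ∧ A.card = j + 1 ∧ C.card = k + 1 := by
  obtain ⟨A, hAS, hA⟩ := S.exists_subset_card_eq (n := j + 1) (by omega)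
  obtain ⟨b, hbA⟩ := Finset.card_pos.1 (by omega : 0 < A.card)
  have hbS : b ∉ S \ A := fun h => (Finset.mem_sdiff.1 h).2 hbA
  refine ⟨A, insert b (S \ A), b, hbA, Finset.mem_insert_self _ _, ?_, hA, ?_⟩
  · rw [Finset.union_insert, Finset.union_sdiff_of_subset hAS,
      Finset.insert_eq_of_mem (hAS hbA)]
  · rw [Finset.card_insert_of_notMem hbS, Finset.card_sdiff_of_subset hAS]
    omega

/-- If `(X,δ)` is a symmetric diversity with `δ(A) = f(|A|−1)` for nonempty `A`,
then `f` satisfies (S1)–(S3). -/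
theorem stmt_3 {X : Type*} [DecidableEq X] [Fintype X] [Nonempty X]
    (f : ℕ → ℝ) (δ : Finset X → ℝ)
    (hpos : ∀ A : Finset X, 0 ≤ δ A)
    (hzero : ∀ A : Finset X, δ A = 0 ↔ A.card ≤ 1)
    (htri : ∀ A B C : Finset X, B.Nonempty → δ (A ∪ C) ≤ δ (A ∪ B) + δ (B ∪ C))
    (hδ : ∀ A : Finset X, A.Nonempty → δ A = f (A.card - 1)) :
    f 0 = 0 ∧
    (∀ j, 0 < j → j < Fintype.card X → 0 < f j) ∧
    (∀ j k, j ≤ k → k < Fintype.card X → f j ≤ f k) ∧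
    (∀ j k, j + k < Fintype.card X → f (j + k) ≤ f j + f k) := by
  have hf : ∀ (A : Finset X) (j : ℕ), A.card = j + 1 → δ A = f j := fun A j hA => by
    simpa [hA] using hδ A (Finset.card_pos.1 (by omega))
  have hsingle : ∀ b : X, δ {b} = 0 := fun b => (hzero {b}).2 (Finset.card_singleton b).le
  have hex : ∀ n, n ≤ Fintype.card X → ∃ A : Finset X, A.card = n := fun n hn => by
    obtain ⟨A, -, hA⟩ := (Finset.univ : Finset X).exists_subset_card_eq (n := n) (by simpa)
    exact ⟨A, hA⟩
  refine ⟨?_, ?_, ?_, ?_⟩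
  · obtain ⟨x⟩ := ‹Nonempty X›
    rw [← hf {x} 0 rfl, hsingle]
  · intro j hj hjX
    obtain ⟨A, hA⟩ := hex (j + 1) (by omega)
    rw [← hf A j hA]
    exact (hpos A).lt_of_ne' fun h => by have := (hzero A).1 h; omega
  · intro j k hjk hkX
    obtain ⟨C, hC⟩ := hex (k + 1) (by omega)
    obtain ⟨A, hAC, hA⟩ := C.exists_subset_card_eq (n := j + 1) (by omega)
    rw [← hf A j hA, ← hf C k hC]
    exact monotone_of_triangle htri hsingle hAC
  · intro j k hjkX
    obtain ⟨S, hS⟩ := hex (j + k + 1) (by omega)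
    obtain ⟨A, C, b, hbA, hbC, rfl, hA, hC⟩ := Finset.exists_union_eq_of_card_eq_add hS
    rw [← hf _ _ hS, ← hf A j hA, ← hf C k hC]
    exact union_le_add_of_triangle htri hbA hbC
end

section
/- Let (X, δ) be a finite diversity with skewness γ = max{δ(A)/δ(B) : |A| = |B| > 1}. Define f(k) = max{δ(A) : A ⊆ X, |A| = k + 1} and δ̂(A) = f(|A| − 1) for nonempty A. Then (X, δ̂) is a symmetric diversity, and for all A with |A| > 1, δ(A) ≤ δ̂(A) ≤ γ·δ(A). -/
/-- Embedding a finite diversity into a symmetric diversity with distortion the skewness γ: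
with `f(k) = max{δ(A) : |A| = k+1}` and `δ̂(A) = f(|A|−1)`, `(X, δ̂)` is a (symmetric)
diversity and `δ(A) ≤ δ̂(A) ≤ γ·δ(A)` for all `A` with `|A| > 1`. -/
theorem stmt_4 {X : Type*} [DecidableEq X] [Fintype X]
    (δ : Finset X → ℝ) (γ : ℝ)
    (hpos : ∀ A : Finset X, 0 ≤ δ A)
    (hzero : ∀ A : Finset X, δ A = 0 ↔ A.card ≤ 1)
    (htri : ∀ A B C : Finset X, B.Nonempty → δ (A ∪ C) ≤ δ (A ∪ B) + δ (B ∪ C))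
    (hγ : ∀ A B : Finset X, 1 < A.card → A.card = B.card → δ A ≤ γ * δ B)
    (f : ℕ → ℝ)
    (hf : ∀ k, k < Fintype.card X →
      IsGreatest {x : ℝ | ∃ A : Finset X, A.card = k + 1 ∧ δ A = x} (f k))
    (δhat : Finset X → ℝ)
    (hδhat : ∀ A : Finset X, A.Nonempty → δhat A = f (A.card - 1))
    (hδhat0 : δhat ∅ = 0) :
    (∀ A : Finset X, 0 ≤ δhat A) ∧
    (∀ A : Finset X, δhat A = 0 ↔ A.card ≤ 1) ∧
    (∀ A B C : Finset X, B.Nonempty → δhat (A ∪ C) ≤ δhat (A ∪ B) + δhat (B ∪ C)) ∧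
    (∀ A B : Finset X, A.card = B.card → δhat A = δhat B) ∧
    (∀ A : Finset X, 1 < A.card → δ A ≤ δhat A ∧ δhat A ≤ γ * δ A) := by
  set N := Fintype.card X with hN
  -- upper bound property of f
  have hfub : ∀ (k : ℕ), k < N → ∀ A : Finset X, A.card = k + 1 → δ A ≤ f k := by
    intro k hk A hA
    exact (hf k hk).2 ⟨A, hA, rfl⟩
  -- monotonicity of δ
  have hstep : ∀ (A : Finset X) (b : X), δ A ≤ δ (insert b A) := by
    intro A b
    have h := htri A {b} ∅ (by simp)
    have h1 : δ {b} = 0 := (hzero _).2 (by simp)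
    simp only [Finset.union_empty] at h
    rw [h1] at h
    calc δ A ≤ δ (A ∪ {b}) + 0 := h
    _ = δ (insert b A) := by rw [add_zero, Finset.union_comm, ← Finset.insert_eq]
  have hmono : ∀ (A B : Finset X), A ⊆ B → δ A ≤ δ B := by
    intro A B hAB
    have key : ∀ S : Finset X, δ A ≤ δ (A ∪ S) := by
      intro S
      induction S using Finset.induction_on with
      | empty => simp
      | @insert a S ha ih =>
        have : A ∪ insert a S = insert a (A ∪ S) := by
          ext x; simp [or_left_comm, or_comm]
        rw [this]
        exact ih.trans (hstep _ _)
    have := key B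
    rwa [Finset.union_eq_right.mpr hAB] at this
  -- nonnegativity of f
  have hf0 : ∀ (k : ℕ), k < N → 0 ≤ f k := by
    intro k hk
    obtain ⟨A, hA, hAf⟩ := (hf k hk).1
    rw [← hAf]; exact hpos A
  -- monotonicity of f
  have hfmono : ∀ (a b : ℕ), a ≤ b → b < N → f a ≤ f b := by
    intro a b hab hb
    obtain ⟨A, hA, hAf⟩ := (hf a (lt_of_le_of_lt hab hb)).1
    obtain ⟨B, hAB, hBu, hBcard⟩ := Finset.exists_subsuperset_card_eq
      (A.subset_univ) (n := b + 1) (by omega) (by simp [Finset.card_univ]; omega)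
    rw [← hAf]
    exact (hmono A B hAB).trans (hfub b hb B hBcard)
  -- subadditivity of f
  have hfsub : ∀ (k m n : ℕ), k ≤ m + n → k < N → m < N → n < N → f k ≤ f m + f n := by
    intro k m n hkmn hk hm hn
    by_cases hkm : k ≤ m
    · have := hfmono k m hkm hm
      have := hf0 n hn
      linarith
    · push_neg at hkm
      obtain ⟨S, hS, hSf⟩ := (hf k hk).1
      obtain ⟨A', hA'S, hA'card⟩ := Finset.exists_subset_card_eq (s := S) (n := m + 1) (by omega)
      have hA'ne : A'.Nonempty := Finset.card_pos.mp (by omega)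
      obtain ⟨b, hb⟩ := hA'ne
      have hbS : b ∈ S := hA'S hb
      have hbnot : b ∉ S \ A' := by simp [hb]
      have hcardC : ({b} ∪ (S \ A')).card = (k - m) + 1 := by
        rw [← Finset.insert_eq, Finset.card_insert_of_notMem hbnot,
          Finset.card_sdiff_of_subset hA'S]
        omega
      have htr := htri A' {b} (S \ A') ⟨b, by simp⟩
      have hU1 : A' ∪ (S \ A') = S := Finset.union_sdiff_of_subset hA'S
      have hU2 : A' ∪ {b} = A' := by
        rw [Finset.union_comm, ← Finset.insert_eq, Finset.insert_eq_self.mpr hb]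
      rw [hU1, hU2] at htr
      have h1 : δ A' ≤ f m := hfub m hm A' hA'card
      have h2 : δ ({b} ∪ (S \ A')) ≤ f (k - m) :=
        hfub (k - m) (by omega) _ hcardC
      have h3 : f (k - m) ≤ f n := hfmono _ _ (by omega) hn
      rw [← hSf]
      linarith
  have hcardle : ∀ A : Finset X, A.card ≤ N := fun A => Finset.card_le_univ A
  -- nonnegativity of δhat
  have hnn : ∀ A : Finset X, 0 ≤ δhat A := by
    intro A
    rcases A.eq_empty_or_nonempty with rfl | hA
    · rw [hδhat0]
    · rw [hδhat A hA]
      have h1 : 1 ≤ A.card := Finset.card_pos.mpr hA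
      exact hf0 _ (by have := hcardle A; omega)
  refine ⟨hnn, ?_, ?_, ?_, ?_⟩
  · -- δhat A = 0 ↔ card ≤ 1
    intro A
    rcases A.eq_empty_or_nonempty with rfl | hA
    · simp [hδhat0]
    · have h1 : 1 ≤ A.card := Finset.card_pos.mpr hA
      have hAN := hcardle A
      rw [hδhat A hA]
      constructor
      · intro h0
        by_contra hc
        push_neg at hc
        have : δ A ≤ f (A.card - 1) := hfub _ (by omega) A (by omega)
        have hA0 : δ A ≠ 0 := fun h => by have := (hzero A).1 h; omega
        have := hpos A
        have : 0 < δ A := lt_of_le_of_ne this (Ne.symm hA0)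
        linarith
      · intro hc
        have hA1 : A.card = 1 := by omega
        obtain ⟨B, hB, hBf⟩ := (hf 0 (by omega)).1
        rw [hA1, ← hBf]
        exact (hzero B).2 (by omega)
  · -- triangle inequality
    intro A B C hB
    rcases (A ∪ C).eq_empty_or_nonempty with h | h
    · rw [h, hδhat0]
      have := hnn (A ∪ B); have := hnn (B ∪ C); linarith
    · have hAB : (A ∪ B).Nonempty := hB.mono Finset.subset_union_right
      have hBC : (B ∪ C).Nonempty := hB.mono Finset.subset_union_left
      rw [hδhat _ h, hδhat _ hAB, hδhat _ hBC]
      have c1 : 1 ≤ (A ∪ C).card := Finset.card_pos.mpr h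
      have c2 : 1 ≤ (A ∪ B).card := Finset.card_pos.mpr hAB
      have c3 : 1 ≤ (B ∪ C).card := Finset.card_pos.mpr hBC
      have hsub : A ∪ C ⊆ (A ∪ B) ∪ (B ∪ C) := by
        intro x hx; simp at hx ⊢; tauto
      have h1 : (A ∪ C).card ≤ ((A ∪ B) ∪ (B ∪ C)).card := Finset.card_le_card hsub
      have h2 : ((A ∪ B) ∪ (B ∪ C)).card + ((A ∪ B) ∩ (B ∪ C)).card
          = (A ∪ B).card + (B ∪ C).card := Finset.card_union_add_card_inter _ _
      have h3 : B.card ≤ ((A ∪ B) ∩ (B ∪ C)).card := by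
        apply Finset.card_le_card
        intro x hx; simp at hx ⊢; tauto
      have hBpos : 1 ≤ B.card := Finset.card_pos.mpr hB
      apply hfsub
      · omega
      · have := hcardle (A ∪ C); omega
      · have := hcardle (A ∪ B); omega
      · have := hcardle (B ∪ C); omega
  · -- symmetry
    intro A B hcard
    rcases A.eq_empty_or_nonempty with rfl | hA
    · have : B = ∅ := Finset.card_eq_zero.mp (by simp at hcard; omega)
      rw [this]
    · have hBne : B.Nonempty := Finset.card_pos.mp (by
        have := Finset.card_pos.mpr hA; omega)
      rw [hδhat A hA, hδhat B hBne, hcard]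
  · -- distortion bounds
    intro A hA
    have hAne : A.Nonempty := Finset.card_pos.mp (by omega)
    have hAN := hcardle A
    have hk : A.card - 1 < N := by omega
    rw [hδhat A hAne]
    constructor
    · exact hfub _ hk A (by omega)
    · obtain ⟨B, hB, hBf⟩ := (hf (A.card - 1) hk).1
      rw [← hBf]
      exact hγ B A (by omega) (by omega)
end

section
/- Let f: {0, 1, …, n−1} → ℝ satisfy f(0) = 0, f(k) > 0 for k > 0, f non-decreasing, and f(j + k) ≤ f(j) + f(k) whenever j + k ≤ n − 1. Then there exists a concave, non-decreasing function g on {0, …, n−1} with g(0) = 0 such that f(k) ≤ g(k) ≤ 2f(k) for all k = 0, 1, …, n−1. -/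
/-!
Take `g` to be the lower envelope of the non-decreasing affine majorants of `f` on
`{0, …, n − 1}`. As an infimum of non-decreasing affine functions, `g` is concave, non-decreasing
and lies above `f`, and `g 0 = 0` because some majorant is linear. For the upper bound, iterating
subadditivity and using monotonicity gives `f j ≤ (⌊j / k⌋ + 1) f k ≤ f k + (f k / k) j`,
so the line through `(0, f k)` of slope `f k / k` is one of the majorants; its value at `k`
is `2 f k`.
-/

open Finset

section Majorant

variable (f : ℕ → ℝ) (N : ℕ)

/-- `p` encodes the affine function `x ↦ p.1 + p.2 * x`. -/
def IsMonotoneAffineMajorant (p : ℝ × ℝ) : Prop :=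
  0 ≤ p.2 ∧ ∀ j ≤ N, f j ≤ p.1 + p.2 * j

noncomputable def concaveMajorant (k : ℕ) : ℝ :=
  ⨅ p : {p : ℝ × ℝ // IsMonotoneAffineMajorant f N p}, p.1.1 + p.1.2 * k

variable {f N}

lemma le_sum_abs_range {j : ℕ} (hj : j ≤ N) : f j ≤ ∑ i ∈ range (N + 1), |f i| :=
  (le_abs_self _).trans <|
    single_le_sum (fun i _ => abs_nonneg (f i)) (mem_range.2 (Nat.lt_succ_of_le hj))

lemma isMonotoneAffineMajorant_linear (h0 : f 0 ≤ 0) :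
    IsMonotoneAffineMajorant f N (0, ∑ i ∈ range (N + 1), |f i|) := by
  have hsum : 0 ≤ ∑ i ∈ range (N + 1), |f i| := by positivity
  refine ⟨hsum, fun j hj => ?_⟩
  rcases Nat.eq_zero_or_pos j with rfl | hjpos
  · simpa using h0
  · have hj1 : (1 : ℝ) ≤ j := by exact_mod_cast hjpos
    rw [zero_add]
    exact (le_sum_abs_range hj).trans (le_mul_of_one_le_right hsum hj1)

instance : Nonempty {p : ℝ × ℝ // IsMonotoneAffineMajorant f N p} :=
  ⟨⟨(∑ i ∈ range (N + 1), |f i|, 0), le_rfl, fun _ hj => by simpa using le_sum_abs_range hj⟩⟩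

lemma bddBelow_range_affineMajorant {k : ℕ} (hk : k ≤ N) :
    BddBelow (Set.range fun p : {p : ℝ × ℝ // IsMonotoneAffineMajorant f N p} =>
      p.1.1 + p.1.2 * k) :=
  ⟨f k, by rintro _ ⟨p, rfl⟩; exact p.2.2 k hk⟩

lemma concaveMajorant_le {k : ℕ} (hk : k ≤ N) {p : ℝ × ℝ}
    (hp : IsMonotoneAffineMajorant f N p) : concaveMajorant f N k ≤ p.1 + p.2 * k :=
  ciInf_le (bddBelow_range_affineMajorant hk) ⟨p, hp⟩

lemma le_concaveMajorant {k : ℕ} (hk : k ≤ N) : f k ≤ concaveMajorant f N k :=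
  le_ciInf fun p => p.2.2 k hk

lemma concaveMajorant_zero (h0 : f 0 = 0) : concaveMajorant f N 0 = 0 := by
  refine le_antisymm ?_ (h0 ▸ le_concaveMajorant (Nat.zero_le N))
  simpa using concaveMajorant_le (Nat.zero_le N) (isMonotoneAffineMajorant_linear h0.le)

lemma concaveMajorant_mono {j k : ℕ} (hjk : j ≤ k) (hk : k ≤ N) :
    concaveMajorant f N j ≤ concaveMajorant f N k := by
  refine le_ciInf fun p => (concaveMajorant_le (hjk.trans hk) p.2).trans ?_
  gcongr
  exact p.2.1

lemma concaveMajorant_concave {a k b : ℕ} (hak : a ≤ k) (hkb : k ≤ b) (hb : b ≤ N) :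
    ((b : ℝ) - k) * concaveMajorant f N a + ((k : ℝ) - a) * concaveMajorant f N b ≤
      ((b : ℝ) - a) * concaveMajorant f N k := by
  have hbk : (0 : ℝ) ≤ b - k := sub_nonneg.2 (by exact_mod_cast hkb)
  have hka : (0 : ℝ) ≤ k - a := sub_nonneg.2 (by exact_mod_cast hak)
  have hba : (0 : ℝ) ≤ b - a := by linarith
  calc ((b : ℝ) - k) * concaveMajorant f N a + ((k : ℝ) - a) * concaveMajorant f N b
      ≤ ⨅ p : {p : ℝ × ℝ // IsMonotoneAffineMajorant f N p}, (b - a) * (p.1.1 + p.1.2 * k) :=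
        le_ciInf fun p => by
          have hpa := concaveMajorant_le (hak.trans (hkb.trans hb)) p.2
          have hpb := concaveMajorant_le hb p.2
          calc ((b : ℝ) - k) * concaveMajorant f N a + ((k : ℝ) - a) * concaveMajorant f N b
              ≤ (b - k) * (p.1.1 + p.1.2 * a) + (k - a) * (p.1.1 + p.1.2 * b) := by gcongr
            _ = (b - a) * (p.1.1 + p.1.2 * k) := by ring
    _ = (b - a) * concaveMajorant f N k := (Real.mul_iInf_of_nonneg hba _).symm

end Majorant

section Subadditive

variable {f : ℕ → ℝ} {N : ℕ}

lemma le_div_add_one_mul (hmono : MonotoneOn f (Set.Iic N))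
    (hsub : ∀ j k, j + k ≤ N → f (j + k) ≤ f j + f k) {k : ℕ} (hk : 0 < k) (hkN : k ≤ N) :
    ∀ j ≤ N, f j ≤ ((j / k : ℕ) + 1 : ℝ) * f k := by
  intro j
  induction j using Nat.strong_induction_on with
  | _ j ih =>
    intro hjN
    rcases lt_or_ge j k with hjk | hkj
    · simpa [Nat.div_eq_of_lt hjk] using hmono (Set.mem_Iic.2 hjN) (Set.mem_Iic.2 hkN) hjk.le
    · have hsplit : f j ≤ f (j - k) + f k := by
        simpa [Nat.sub_add_cancel hkj] using hsub (j - k) k (by omega)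
      have hprev := ih (j - k) (by omega) (by omega)
      rw [Nat.div_eq_sub_div hk hkj]
      push_cast
      linarith

lemma isMonotoneAffineMajorant_secant (h0 : f 0 = 0) (hmono : MonotoneOn f (Set.Iic N))
    (hsub : ∀ j k, j + k ≤ N → f (j + k) ≤ f j + f k) {k : ℕ} (hk : 0 < k) (hkN : k ≤ N) :
    IsMonotoneAffineMajorant f N (f k, f k / k) := by
  have hkpos : (0 : ℝ) < k := by exact_mod_cast hk
  have hfk : 0 ≤ f k :=
    h0 ▸ hmono (Set.mem_Iic.2 (Nat.zero_le N)) (Set.mem_Iic.2 hkN) (Nat.zero_le k)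
  refine ⟨div_nonneg hfk hkpos.le, fun j hj => ?_⟩
  calc f j ≤ ((j / k : ℕ) + 1 : ℝ) * f k := le_div_add_one_mul hmono hsub hk hkN j hj
    _ ≤ ((j : ℝ) / k + 1) * f k := by gcongr; exact Nat.cast_div_le
    _ = f k + f k / k * j := by field_simp; ring

lemma concaveMajorant_le_two_mul (h0 : f 0 = 0) (hmono : MonotoneOn f (Set.Iic N))
    (hsub : ∀ j k, j + k ≤ N → f (j + k) ≤ f j + f k) {k : ℕ} (hkN : k ≤ N) :
    concaveMajorant f N k ≤ 2 * f k := by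
  rcases Nat.eq_zero_or_pos k with rfl | hk
  · simp [concaveMajorant_zero h0, h0]
  · have hkpos : (k : ℝ) ≠ 0 := by positivity
    calc concaveMajorant f N k ≤ f k + f k / k * k :=
          concaveMajorant_le hkN (isMonotoneAffineMajorant_secant h0 hmono hsub hk hkN)
      _ = 2 * f k := by field_simp; ring

end Subadditive

theorem stmt_6_general (n : ℕ) (hn : 0 < n) (f : ℕ → ℝ)
    (hS1a : f 0 = 0)
    (hS2 : ∀ j k, j ≤ k → k < n → f j ≤ f k)
    (hS3 : ∀ j k, j + k ≤ n - 1 → f (j + k) ≤ f j + f k) :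
    ∃ g : ℕ → ℝ,
      (∀ a k b : ℕ, a ≤ k → k ≤ b → b ≤ n - 1 →
        ((b : ℝ) - a) * g k ≥ ((b : ℝ) - k) * g a + ((k : ℝ) - a) * g b) ∧
      (∀ j k, j ≤ k → k ≤ n - 1 → g j ≤ g k) ∧
      g 0 = 0 ∧
      (∀ k, k ≤ n - 1 → f k ≤ g k ∧ g k ≤ 2 * f k) := by
  have hmono : MonotoneOn f (Set.Iic (n - 1)) := fun j _ k hk hjk =>
    hS2 j k hjk (by rw [Set.mem_Iic] at hk; omega)
  exact ⟨concaveMajorant f (n - 1),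
    fun a k b hak hkb hb => concaveMajorant_concave hak hkb hb,
    fun j k hjk hk => concaveMajorant_mono hjk hk, concaveMajorant_zero hS1a,
    fun k hk => ⟨le_concaveMajorant hk, concaveMajorant_le_two_mul hS1a hmono hS3 hk⟩⟩

/-- Every function satisfying (S1)–(S3) on `{0,…,n−1}` is approximated within a factor 2
by a concave non-decreasing function. -/
theorem stmt_6 (n : ℕ) (hn : 0 < n) (f : ℕ → ℝ)
    (hS1a : f 0 = 0) (hS1b : ∀ k, 0 < k → k < n → 0 < f k)
    (hS2 : ∀ j k, j ≤ k → k < n → f j ≤ f k)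
    (hS3 : ∀ j k, j + k ≤ n - 1 → f (j + k) ≤ f j + f k) :
    ∃ g : ℕ → ℝ,
      (∀ a k b : ℕ, a ≤ k → k ≤ b → b ≤ n - 1 →
        ((b : ℝ) - a) * g k ≥ ((b : ℝ) - k) * g a + ((k : ℝ) - a) * g b) ∧
      (∀ j k, j ≤ k → k ≤ n - 1 → g j ≤ g k) ∧
      g 0 = 0 ∧
      (∀ k, k ≤ n - 1 → f k ≤ g k ∧ g k ≤ 2 * f k) :=
  stmt_6_general n hn f hS1a hS2 hS3
end

section
/- Let f be a subadditive non-decreasing function on nonnegative integers with f(0) = 0, and let g be the smallest concave function on {0, …, n−1} with g ≥ f. If g(k) > f(k) for some k, then there exist 0 ≤ a < k < b ≤ n−1 with g(k) = ((b−k)/(b−a))f(a) + ((k−a)/(b−a))f(b), and f(b) ≤ (b/k + 1)·f(k), whence g(k) ≤ 2f(k). -/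
/-!
Every chord of `f` straddling `k` lies below `g` at `k`, since `g` is concave and above `f`.
Conversely, if `M ≥ f k` bounds all these chord values at `k`, the slopes from `(k, M)` to the
points of `f` on the right are all at most those on the left, so some line through `(k, M)`
lies above `f`; by minimality `g k ≤ M`. Hence `g k` is the largest straddling chord value,
unless it equals `f k`. For the bound, write `b = q k + r` with `r < k`: subadditivity and
monotonicity give `f b ≤ (q + 1) f k ≤ (b / k + 1) f k`, and together with `f a ≤ f k` the chord
value is at most `2 f k`.
-/

open Finset

def IsConcaveUpTo (m : ℕ) (g : ℕ → ℝ) : Prop :=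
  ∀ a k b : ℕ, a ≤ k → k ≤ b → b ≤ m →
    ((b : ℝ) - a) * g k ≥ ((b : ℝ) - k) * g a + ((k : ℝ) - a) * g b

noncomputable def chord (f : ℕ → ℝ) (a b k : ℕ) : ℝ :=
  (((b : ℝ) - k) / ((b : ℝ) - a)) * f a + (((k : ℝ) - a) / ((b : ℝ) - a)) * f b

theorem Finset.exists_separating {ι κ α : Type*} [LinearOrder α] [Nonempty α]
    (s : Finset ι) (t : Finset κ) (u : ι → α) (v : κ → α)
    (h : ∀ i ∈ s, ∀ j ∈ t, u i ≤ v j) :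
    ∃ c, (∀ i ∈ s, u i ≤ c) ∧ ∀ j ∈ t, c ≤ v j := by
  rcases s.eq_empty_or_nonempty with rfl | hs
  · rcases t.eq_empty_or_nonempty with rfl | ht
    · exact ⟨Classical.arbitrary α, by simp, by simp⟩
    · obtain ⟨j₀, hj₀, hmin⟩ := t.exists_min_image v ht
      exact ⟨v j₀, by simp, hmin⟩
  · obtain ⟨i₀, hi₀, hmax⟩ := s.exists_max_image u hs
    exact ⟨u i₀, hmax, h i₀ hi₀⟩

theorem chord_le_of_isConcaveUpTo {m : ℕ} {f g : ℕ → ℝ} (hg : IsConcaveUpTo m g)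
    (hfg : ∀ j, j ≤ m → f j ≤ g j) {a b k : ℕ} (hak : a ≤ k) (hkb : k ≤ b) (hbm : b ≤ m)
    (hab : a < b) : chord f a b k ≤ g k := by
  have hak' : (a : ℝ) ≤ k := by exact_mod_cast hak
  have hkb' : (k : ℝ) ≤ b := by exact_mod_cast hkb
  have hab' : (0 : ℝ) < b - a := by rw [sub_pos]; exact_mod_cast hab
  have hchord : chord f a b k = (((b : ℝ) - k) * f a + ((k : ℝ) - a) * f b) / (b - a) := by
    unfold chord; field_simp
  rw [hchord, div_le_iff₀ hab']
  have := hg a k b hak hkb hbm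
  nlinarith [mul_le_mul_of_nonneg_left (hfg a (by omega)) (sub_nonneg.2 hkb'),
    mul_le_mul_of_nonneg_left (hfg b hbm) (sub_nonneg.2 hak')]

theorem isConcaveUpTo_affine (m k : ℕ) (M d : ℝ) :
    IsConcaveUpTo m (fun j => M + d * ((j : ℝ) - k)) := by
  intro a j b _ _ _
  exact ge_of_eq (by ring)

theorem exists_affine_majorant {m k : ℕ} {f : ℕ → ℝ} {M : ℝ} (hfk : f k ≤ M)
    (hchord : ∀ a b, a < k → k < b → b ≤ m → chord f a b k ≤ M) :
    ∃ d : ℝ, ∀ j, j ≤ m → f j ≤ M + d * ((j : ℝ) - k) := by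
  obtain ⟨d, hright, hleft⟩ := Finset.exists_separating (Ioc k m) (range k)
    (fun j => (f j - M) / ((j : ℝ) - k)) (fun j => (M - f j) / ((k : ℝ) - j)) (by
      intro b hb a ha
      rw [mem_Ioc] at hb
      rw [mem_range] at ha
      have hkb : (0 : ℝ) < b - k := by rw [sub_pos]; exact_mod_cast hb.1
      have hak : (0 : ℝ) < k - a := by rw [sub_pos]; exact_mod_cast ha
      have h := hchord a b ha hb.1 hb.2
      rw [chord, div_mul_eq_mul_div, div_mul_eq_mul_div, ← add_div,
        div_le_iff₀ (by linarith)] at h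
      rw [div_le_div_iff₀ hkb hak]
      linarith)
  refine ⟨d, fun j hj => ?_⟩
  rcases lt_trichotomy j k with hjk | rfl | hjk
  · have hpos : (0 : ℝ) < k - j := by rw [sub_pos]; exact_mod_cast hjk
    have := hleft j (mem_range.2 hjk)
    rw [le_div_iff₀ hpos] at this
    linarith
  · simpa using hfk
  · have hpos : (0 : ℝ) < j - k := by rw [sub_pos]; exact_mod_cast hjk
    have := hright j (mem_Ioc.2 ⟨hjk, hj⟩)
    rw [div_le_iff₀ hpos] at this
    linarith

theorem le_of_chord_le {m k : ℕ} {f g : ℕ → ℝ}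
    (hmin : ∀ h : ℕ → ℝ, IsConcaveUpTo m h → (∀ j, j ≤ m → f j ≤ h j) → ∀ j, j ≤ m → g j ≤ h j)
    (hk : k ≤ m) {M : ℝ} (hfk : f k ≤ M)
    (hchord : ∀ a b, a < k → k < b → b ≤ m → chord f a b k ≤ M) : g k ≤ M := by
  obtain ⟨d, hd⟩ := exists_affine_majorant hfk hchord
  simpa using hmin _ (isConcaveUpTo_affine m k M d) hd k hk

theorem exists_chord_eq_of_lt {m k : ℕ} {f g : ℕ → ℝ} (hg : IsConcaveUpTo m g)
    (hfg : ∀ j, j ≤ m → f j ≤ g j)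
    (hmin : ∀ h : ℕ → ℝ, IsConcaveUpTo m h → (∀ j, j ≤ m → f j ≤ h j) → ∀ j, j ≤ m → g j ≤ h j)
    (hk : k ≤ m) (hlt : f k < g k) :
    ∃ a b, a < k ∧ k < b ∧ b ≤ m ∧ g k = chord f a b k := by
  set values : Finset ℝ := insert (f k) ((range k ×ˢ Ioc k m).image fun p : ℕ × ℕ => chord f p.1 p.2 k)
  have hM : g k ≤ values.max' (insert_nonempty _ _) := by
    refine le_of_chord_le hmin hk (le_max' _ _ (mem_insert_self _ _)) fun a b hak hkb hbm => ?_
    refine le_max' values _ (mem_insert_of_mem (mem_image.2 ⟨(a, b), ?_, rfl⟩))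
    simp [hak, hkb, hbm]
  rcases mem_insert.1 (values.max'_mem (insert_nonempty _ _)) with hfk | hmem
  · exact absurd (hfk ▸ hM) hlt.not_ge
  · obtain ⟨⟨a, b⟩, hab, hchord⟩ := mem_image.1 hmem
    simp only [mem_product, mem_range, mem_Ioc] at hab
    obtain ⟨hak, hkb, hbm⟩ := hab
    refine ⟨a, b, hak, hkb, hbm, le_antisymm (hchord ▸ hM) ?_⟩
    exact chord_le_of_isConcaveUpTo hg hfg hak.le hkb.le hbm (hak.trans hkb)

section Subadditive

variable {m : ℕ} {f : ℕ → ℝ}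

theorem le_mul_add_of_subadditive (hsub : ∀ j k, j + k ≤ m → f (j + k) ≤ f j + f k)
    (k r : ℕ) : ∀ q : ℕ, q * k + r ≤ m → f (q * k + r) ≤ q * f k + f r
  | 0, _ => by simp
  | q + 1, h => by
    have hq : q * k + r ≤ m := by nlinarith
    calc f ((q + 1) * k + r) = f (k + (q * k + r)) := by ring_nf
      _ ≤ f k + f (q * k + r) := hsub _ _ (by nlinarith)
      _ ≤ f k + (q * f k + f r) := by gcongr; exact le_mul_add_of_subadditive hsub k r q hq
      _ = ((q + 1 : ℕ) : ℝ) * f k + f r := by push_cast; ring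

theorem le_div_add_one_mul_of_subadditive (hf0 : f 0 = 0)
    (hmono : ∀ j k, j ≤ k → k ≤ m → f j ≤ f k)
    (hsub : ∀ j k, j + k ≤ m → f (j + k) ≤ f j + f k)
    {k b : ℕ} (hk : 0 < k) (hkm : k ≤ m) (hbm : b ≤ m) :
    f b ≤ ((b : ℝ) / k + 1) * f k := by
  have hfk : 0 ≤ f k := hf0 ▸ hmono 0 k k.zero_le hkm
  have hdiv : ((b / k : ℕ) : ℝ) ≤ (b : ℝ) / k := Nat.cast_div_le
  have hb : b / k * k + b % k = b := Nat.div_add_mod' b k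
  calc f b = f (b / k * k + b % k) := by rw [hb]
    _ ≤ (b / k : ℕ) * f k + f (b % k) :=
        le_mul_add_of_subadditive hsub k (b % k) (b / k) (by rw [hb]; exact hbm)
    _ ≤ (b / k : ℕ) * f k + f k := by gcongr; exact hmono _ _ (Nat.mod_lt b hk).le hkm
    _ ≤ ((b : ℝ) / k + 1) * f k := by nlinarith

end Subadditive

theorem chord_le_two_mul {f : ℕ → ℝ} {a b k : ℕ} (hak : a < k) (hkb : k < b)
    (hfk : 0 ≤ f k) (hfa : f a ≤ f k) (hfb : f b ≤ ((b : ℝ) / k + 1) * f k) :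
    chord f a b k ≤ 2 * f k := by
  have hak' : (a : ℝ) < k := by exact_mod_cast hak
  have hkb' : (k : ℝ) < b := by exact_mod_cast hkb
  have ha : (0 : ℝ) ≤ a := a.cast_nonneg
  have hk : (0 : ℝ) < k := by linarith
  have hba : (0 : ℝ) < b - a := by linarith
  -- `(b - k) + (k - a) (b / k + 1) ≤ 2 (b - a)` amounts to `a ≤ a b / k`.
  have hcoef : ((b : ℝ) - k) + ((k : ℝ) - a) * ((b : ℝ) / k + 1) ≤ 2 * ((b : ℝ) - a) := by
    rw [← sub_nonneg]
    have : 2 * ((b : ℝ) - a) - ((b - k) + (k - a) * (b / k + 1)) = a * (b - k) / k := by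
      field_simp; ring
    rw [this]; positivity
  calc chord f a b k = (((b : ℝ) - k) * f a + ((k : ℝ) - a) * f b) / (b - a) := by
        unfold chord; field_simp
    _ ≤ (((b : ℝ) - k) + ((k : ℝ) - a) * ((b : ℝ) / k + 1)) * f k / (b - a) := by
        gcongr ?_ / _
        nlinarith [mul_le_mul_of_nonneg_left hfa (sub_nonneg.2 hkb'.le),
          mul_le_mul_of_nonneg_left hfb (sub_nonneg.2 hak'.le)]
    _ ≤ 2 * ((b : ℝ) - a) * f k / (b - a) := by gcongr
    _ = 2 * f k := by field_simp

theorem stmt_8_general (n : ℕ) (f g : ℕ → ℝ)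
    (hf0 : f 0 = 0)
    (hmono : ∀ j k, j ≤ k → k ≤ n - 1 → f j ≤ f k)
    (hsub : ∀ j k, j + k ≤ n - 1 → f (j + k) ≤ f j + f k)
    (hgconc : ∀ a k b : ℕ, a ≤ k → k ≤ b → b ≤ n - 1 →
      ((b : ℝ) - a) * g k ≥ ((b : ℝ) - k) * g a + ((k : ℝ) - a) * g b)
    (hge : ∀ k, k ≤ n - 1 → f k ≤ g k)
    (hmin : ∀ h : ℕ → ℝ,
      (∀ a k b : ℕ, a ≤ k → k ≤ b → b ≤ n - 1 →
        ((b : ℝ) - a) * h k ≥ ((b : ℝ) - k) * h a + ((k : ℝ) - a) * h b) →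
      (∀ k, k ≤ n - 1 → f k ≤ h k) → ∀ k, k ≤ n - 1 → g k ≤ h k) :
    ∀ k, k ≤ n - 1 → f k < g k →
      (∃ a b : ℕ, a < k ∧ k < b ∧ b ≤ n - 1 ∧
        g k = (((b : ℝ) - k) / ((b : ℝ) - a)) * f a + (((k : ℝ) - a) / ((b : ℝ) - a)) * f b ∧
        f b ≤ ((b : ℝ) / k + 1) * f k) ∧
      g k ≤ 2 * f k := by
  intro k hk hlt
  obtain ⟨a, b, hak, hkb, hbm, hgk⟩ := exists_chord_eq_of_lt hgconc hge hmin hk hlt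
  have hfk : 0 ≤ f k := hf0 ▸ hmono 0 k k.zero_le hk
  have hfb : f b ≤ ((b : ℝ) / k + 1) * f k :=
    le_div_add_one_mul_of_subadditive hf0 hmono hsub (by omega) hk hbm
  refine ⟨⟨a, b, hak, hkb, hbm, hgk, hfb⟩, ?_⟩
  exact hgk ▸ chord_le_two_mul hak hkb hfk (hmono a k hak.le hk) hfb

/-- If `g` is the smallest concave function above a subadditive non-decreasing `f` with
`f(0)=0` on `{0,…,n−1}`, and `g(k) > f(k)`, then `g(k)` equals a chord value
`((b−k)/(b−a))f(a) + ((k−a)/(b−a))f(b)` for some `a < k < b`, `f(b) ≤ (b/k + 1)f(k)`,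
and hence `g(k) ≤ 2f(k)`. -/
theorem stmt_8 (n : ℕ) (hn : 0 < n) (f g : ℕ → ℝ)
    (hf0 : f 0 = 0)
    (hmono : ∀ j k, j ≤ k → k ≤ n - 1 → f j ≤ f k)
    (hsub : ∀ j k, j + k ≤ n - 1 → f (j + k) ≤ f j + f k)
    (hgconc : ∀ a k b : ℕ, a ≤ k → k ≤ b → b ≤ n - 1 →
      ((b : ℝ) - a) * g k ≥ ((b : ℝ) - k) * g a + ((k : ℝ) - a) * g b)
    (hge : ∀ k, k ≤ n - 1 → f k ≤ g k)
    (hmin : ∀ h : ℕ → ℝ,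
      (∀ a k b : ℕ, a ≤ k → k ≤ b → b ≤ n - 1 →
        ((b : ℝ) - a) * h k ≥ ((b : ℝ) - k) * h a + ((k : ℝ) - a) * h b) →
      (∀ k, k ≤ n - 1 → f k ≤ h k) → ∀ k, k ≤ n - 1 → g k ≤ h k) :
    ∀ k, k ≤ n - 1 → f k < g k →
      (∃ a b : ℕ, a < k ∧ k < b ∧ b ≤ n - 1 ∧
        g k = (((b : ℝ) - k) / ((b : ℝ) - a)) * f a + (((k : ℝ) - a) / ((b : ℝ) - a)) * f b ∧
        f b ≤ ((b : ℝ) / k + 1) * f k) ∧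
      g k ≤ 2 * f k :=
  stmt_8_general n f g hf0 hmono hsub hgconc hge hmin
end

section
/- Let n > 1 and let (X, δ) be a symmetric diversity with |X| = n, δ(A) = f(|A| − 1). Then there exist nonnegative coefficients λ_1, …, λ_{n−1} such that f(k) ≤ Σ_{i=1}^{n−1} λ_i·min(i, k) ≤ 2f(k) for all k = 0, …, n−1. -/
/-!
Subadditivity and monotonicity give `f k ≤ ⌈k / j⌉ f j ≤ f j * (1 + k / j)`, so the lower
envelope `g` of these lines over `1 ≤ j ≤ n - 1` (with `g 0 = 0`) lies above `f`, and the line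
`j = k` gives `g k ≤ 2 f k`. As a minimum of affine functions `g` is concave, and it is
nondecreasing. A function `g` with `g 0 = 0` equals `∑ λᵢ min(i, k)` when `λᵢ` is its negated
second difference (and `λ_{n-1}` its last first difference), so these `λᵢ` are nonnegative.
-/

open Finset

section MinCombination

variable {g : ℕ → ℝ} {N : ℕ}

noncomputable def truncDiff (g : ℕ → ℝ) (N m : ℕ) : ℝ :=
  if m ≤ N then g m - g (m - 1) else 0

noncomputable def minCoeff (g : ℕ → ℝ) (N i : ℕ) : ℝ :=
  truncDiff g N i - truncDiff g N (i + 1)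

lemma sum_Ico_minCoeff {k : ℕ} (hk : k < N) :
    ∑ i ∈ Ico (k + 1) (N + 1), minCoeff g N i = g (k + 1) - g k := by
  have htop : truncDiff g N (N + 1) = 0 := if_neg (by omega)
  have hbot : truncDiff g N (k + 1) = g (k + 1) - g k := if_pos hk
  have htel := sum_Ico_sub (f := truncDiff g N) (show k + 1 ≤ N + 1 by omega)
  rw [htop, hbot] at htel
  simp only [minCoeff, sum_sub_distrib] at htel ⊢
  linarith

lemma sum_minCoeff_mul_min (hg0 : g 0 = 0) :
    ∀ k ≤ N, ∑ i ∈ Icc 1 N, minCoeff g N i * ((min i k : ℕ) : ℝ) = g k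
  | 0, _ => by simp [hg0]
  | k + 1, hk => by
    have hstep :
        ∀ i, ((min i (k + 1) : ℕ) : ℝ) = (min i k : ℕ) + if k < i then 1 else 0 := by
      intro i
      split_ifs with h <;> norm_cast <;> omega
    have hfilter : {i ∈ Icc 1 N | k < i} = Ico (k + 1) (N + 1) := by
      ext i; simp only [mem_filter, mem_Icc, mem_Ico]; omega
    calc ∑ i ∈ Icc 1 N, minCoeff g N i * ((min i (k + 1) : ℕ) : ℝ)
        = ∑ i ∈ Icc 1 N, minCoeff g N i * ((min i k : ℕ) : ℝ)
          + ∑ i ∈ {i ∈ Icc 1 N | k < i}, minCoeff g N i := by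
          simp only [hstep, mul_add, mul_ite, mul_one, mul_zero, sum_add_distrib, sum_ite,
            sum_const_zero, add_zero]
      _ = g k + (g (k + 1) - g k) := by
          rw [sum_minCoeff_mul_min hg0 k (by omega), hfilter, sum_Ico_minCoeff (by omega)]
      _ = g (k + 1) := by ring

lemma minCoeff_nonneg (hmono : g (N - 1) ≤ g N)
    (hconc : ∀ i, 1 ≤ i → i < N → g (i - 1) + g (i + 1) ≤ 2 * g i)
    {i : ℕ} (hi : 1 ≤ i) (hiN : i ≤ N) : 0 ≤ minCoeff g N i := by
  rcases hiN.lt_or_eq with hlt | rfl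
  · have := hconc i hi hlt
    simp only [minCoeff, truncDiff, if_pos hiN, if_pos (Nat.succ_le_of_lt hlt), Nat.add_sub_cancel]
    linarith
  · simp only [minCoeff, truncDiff, le_refl, if_true, if_neg (Nat.not_succ_le_self i)]
    linarith

theorem exists_nonneg_sum_mul_min_eq (hg0 : g 0 = 0) (hmono : g (N - 1) ≤ g N)
    (hconc : ∀ i, 1 ≤ i → i < N → g (i - 1) + g (i + 1) ≤ 2 * g i) :
    ∃ lam : ℕ → ℝ, (∀ i, 1 ≤ i → i ≤ N → 0 ≤ lam i) ∧
      ∀ k ≤ N, ∑ i ∈ Icc 1 N, lam i * ((min i k : ℕ) : ℝ) = g k :=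
  ⟨minCoeff g N, fun _ hi hiN => minCoeff_nonneg hmono hconc hi hiN, sum_minCoeff_mul_min hg0⟩

end MinCombination

section Envelope

variable {f : ℕ → ℝ} {N : ℕ}

lemma le_mul_one_add_div_of_subadditive (hmono : MonotoneOn f (Set.Iic N))
    (hsub : ∀ a b, a + b ≤ N → f (a + b) ≤ f a + f b) {j : ℕ} (hj : j ∈ Icc 1 N)
    (hfj : 0 ≤ f j) : ∀ k ≤ N, f k ≤ f j * (1 + k / j) := by
  obtain ⟨hj1, hjN⟩ := mem_Icc.mp hj
  have hj0 : (j : ℝ) ≠ 0 := by positivity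
  intro k
  induction k using Nat.strong_induction_on with
  | _ k ih =>
    intro hk
    rcases le_or_gt k j with hkj | hjk
    · calc f k ≤ f j := hmono (Set.mem_Iic.mpr hk) (Set.mem_Iic.mpr hjN) hkj
        _ ≤ f j * (1 + k / j) :=
          le_mul_of_one_le_right hfj (le_add_of_nonneg_right (by positivity))
    · obtain ⟨m, rfl⟩ : ∃ m, k = m + j := ⟨k - j, by omega⟩
      calc f (m + j) ≤ f m + f j := hsub m j hk
        _ ≤ f j * (1 + m / j) + f j := by gcongr; exact ih m (by omega) (by omega)
        _ = f j * (1 + (m + j : ℕ) / j) := by push_cast; field_simp; ring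

noncomputable def envelope (f : ℕ → ℝ) (N k : ℕ) : ℝ :=
  if h : 1 ≤ N ∧ k ≠ 0 then
    (Icc 1 N).inf' (nonempty_Icc.mpr h.1) fun j => f j * (1 + k / j)
  else 0

@[simp]
lemma envelope_zero (f : ℕ → ℝ) (N : ℕ) : envelope f N 0 = 0 := by
  simp [envelope]

lemma envelope_le {j : ℕ} (hj : j ∈ Icc 1 N) (hfj : 0 ≤ f j) (k : ℕ) :
    envelope f N k ≤ f j * (1 + k / j) := by
  unfold envelope
  split_ifs
  · exact inf'_le _ hj
  · positivity

lemma le_envelope (hN : 1 ≤ N) {k : ℕ} (hk : k ≠ 0) {c : ℝ}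
    (h : ∀ j ∈ Icc 1 N, c ≤ f j * (1 + k / j)) : c ≤ envelope f N k := by
  rw [envelope, dif_pos ⟨hN, hk⟩]
  exact le_inf' _ _ h

lemma exists_envelope_eq (hN : 1 ≤ N) {k : ℕ} (hk : k ≠ 0) :
    ∃ j ∈ Icc 1 N, envelope f N k = f j * (1 + k / j) := by
  rw [envelope, dif_pos ⟨hN, hk⟩]
  exact exists_mem_eq_inf' _ _

lemma envelope_mono (hf : ∀ j ≤ N, 0 ≤ f j) (hN : 1 ≤ N) : Monotone (envelope f N) := by
  refine monotone_nat_of_le_succ fun k => le_envelope hN k.succ_ne_zero fun j hj => ?_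
  have hfj := hf j (mem_Icc.mp hj).2
  calc envelope f N k ≤ f j * (1 + k / j) := envelope_le hj hfj k
    _ ≤ f j * (1 + (k + 1 : ℕ) / j) := by gcongr; exact_mod_cast k.le_succ

lemma envelope_concave (hf : ∀ j ≤ N, 0 ≤ f j) (hN : 1 ≤ N) {i : ℕ} (hi : 1 ≤ i) :
    envelope f N (i - 1) + envelope f N (i + 1) ≤ 2 * envelope f N i := by
  obtain ⟨j, hj, hji⟩ := exists_envelope_eq (f := f) hN (by omega : i ≠ 0)
  have hfj := hf j (mem_Icc.mp hj).2
  have hprev := envelope_le hj hfj (i - 1)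
  have hnext := envelope_le hj hfj (i + 1)
  push_cast [Nat.cast_sub hi] at hprev hnext
  have hline : f j * (1 + (i - 1) / j) + f j * (1 + (i + 1) / j) = 2 * (f j * (1 + i / j)) := by
    ring
  linarith

lemma envelope_le_two_mul {k : ℕ} (hk : k ∈ Icc 1 N) (hfk : 0 ≤ f k) :
    envelope f N k ≤ 2 * f k := by
  have hk0 : (k : ℝ) ≠ 0 := by have := (mem_Icc.mp hk).1; positivity
  have := envelope_le hk hfk k
  rwa [div_self hk0, one_add_one_eq_two, mul_comm] at this

end Envelope

section Diversity

variable {X : Type*} [Fintype X] {δ : Finset X → ℝ} {f : ℕ → ℝ}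

lemma exists_finset_card_eq {m : ℕ} (hm : m ≤ Fintype.card X) : ∃ A : Finset X, #A = m :=
  let ⟨A, _, hA⟩ := exists_subset_card_eq (s := (univ : Finset X)) (by simpa using hm)
  ⟨A, hA⟩

lemma diversity_fn_zero (hzero : ∀ A : Finset X, δ A = 0 ↔ #A ≤ 1)
    (hδ : ∀ A : Finset X, A.Nonempty → δ A = f (#A - 1)) (hX : 1 ≤ Fintype.card X) :
    f 0 = 0 := by
  obtain ⟨A, hA⟩ := exists_finset_card_eq hX
  simpa [hA, (hzero A).mpr hA.le] using (hδ A (card_pos.mp (by omega))).symm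

lemma diversity_fn_le_succ [DecidableEq X] (hzero : ∀ A : Finset X, δ A = 0 ↔ #A ≤ 1)
    (htri : ∀ A B C : Finset X, B.Nonempty → δ (A ∪ C) ≤ δ (A ∪ B) + δ (B ∪ C))
    (hδ : ∀ A : Finset X, A.Nonempty → δ A = f (#A - 1)) {k : ℕ}
    (hk : k + 2 ≤ Fintype.card X) : f k ≤ f (k + 1) := by
  obtain ⟨B, hB⟩ := exists_finset_card_eq hk
  obtain ⟨x, hx⟩ := card_pos.mp (by omega : 0 < #B)
  have hcard : #(B.erase x) = k + 1 := by simp [hx, hB]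
  have h := htri ∅ {x} (B.erase x) (singleton_nonempty x)
  rw [empty_union, empty_union, ← insert_eq, insert_erase hx,
    (hzero {x}).mpr (card_singleton x).le, hδ B ⟨x, hx⟩,
    hδ (B.erase x) (card_pos.mp (by omega)), hcard, hB] at h
  simpa using h

lemma diversity_fn_monotoneOn [DecidableEq X] (hzero : ∀ A : Finset X, δ A = 0 ↔ #A ≤ 1)
    (htri : ∀ A B C : Finset X, B.Nonempty → δ (A ∪ C) ≤ δ (A ∪ B) + δ (B ∪ C))
    (hδ : ∀ A : Finset X, A.Nonempty → δ A = f (#A - 1)) :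
    MonotoneOn f (Set.Iic (Fintype.card X - 1)) :=
  monotoneOn_of_le_add_one Set.ordConnected_Iic fun _ _ _ hk =>
    diversity_fn_le_succ hzero htri hδ (by simp only [Set.mem_Iic] at hk; omega)

lemma diversity_fn_add_le [DecidableEq X]
    (htri : ∀ A B C : Finset X, B.Nonempty → δ (A ∪ C) ≤ δ (A ∪ B) + δ (B ∪ C))
    (hδ : ∀ A : Finset X, A.Nonempty → δ A = f (#A - 1)) {a b : ℕ}
    (hab : a + b + 1 ≤ Fintype.card X) : f (a + b) ≤ f a + f b := by
  obtain ⟨S, hS⟩ := exists_finset_card_eq hab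
  obtain ⟨A, hAS, hA⟩ := exists_subset_card_eq (show a + 1 ≤ #S by omega)
  obtain ⟨x, hxA⟩ := card_pos.mp (show 0 < #A by omega)
  -- `S = A ∪ C` with `A ∩ C = {x}`; the triangle inequality through `{x}` splits `δ S`.
  set C := insert x (S \ A)
  have hC : #C = b + 1 := by
    rw [card_insert_of_notMem (by simp [hxA]), card_sdiff_of_subset hAS, hS, hA]
    omega
  have hAC : A ∪ C = S := by
    rw [union_comm, insert_union, sdiff_union_of_subset hAS, insert_eq_of_mem (hAS hxA)]
  have h := htri A {x} C (singleton_nonempty x)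
  rw [hAC, union_eq_left.mpr (singleton_subset_iff.mpr hxA), ← insert_eq,
    insert_eq_of_mem (mem_insert_self x _), hδ S ⟨x, hAS hxA⟩, hδ A ⟨x, hxA⟩,
    hδ C ⟨x, mem_insert_self x _⟩, hS, hA, hC] at h
  simpa using h

end Diversity

theorem stmt_10_general {X : Type*} [DecidableEq X] [Fintype X] (n : ℕ) (hn : 1 < n)
    (hcard : Fintype.card X = n) (δ : Finset X → ℝ) (f : ℕ → ℝ)
    (hzero : ∀ A : Finset X, δ A = 0 ↔ A.card ≤ 1)
    (htri : ∀ A B C : Finset X, B.Nonempty → δ (A ∪ C) ≤ δ (A ∪ B) + δ (B ∪ C))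
    (hδ : ∀ A : Finset X, A.Nonempty → δ A = f (A.card - 1)) :
    ∃ lam : ℕ → ℝ,
      (∀ i, 1 ≤ i → i ≤ n - 1 → 0 ≤ lam i) ∧
      (∀ k, k ≤ n - 1 →
        f k ≤ ∑ i ∈ Finset.Icc 1 (n - 1), lam i * min i k ∧
        ∑ i ∈ Finset.Icc 1 (n - 1), lam i * min i k ≤ 2 * f k) := by
  subst hcard
  have hN : 1 ≤ Fintype.card X - 1 := by omega
  have hf0 := diversity_fn_zero hzero hδ hn.le
  have hmono := diversity_fn_monotoneOn hzero htri hδ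
  have hfnn : ∀ j ≤ Fintype.card X - 1, 0 ≤ f j := fun j hj =>
    hf0 ▸ hmono (Set.mem_Iic.mpr (Nat.zero_le _)) (Set.mem_Iic.mpr hj) (Nat.zero_le j)
  obtain ⟨lam, hlam, hsum⟩ := exists_nonneg_sum_mul_min_eq (envelope_zero f _)
    (envelope_mono hfnn hN (Nat.sub_le _ 1)) fun i hi _ => envelope_concave hfnn hN hi
  refine ⟨lam, hlam, fun k hk => ?_⟩
  rw [hsum k hk]
  rcases Nat.eq_zero_or_pos k with rfl | hk0
  · simp [hf0]
  have hsub : ∀ a b, a + b ≤ Fintype.card X - 1 → f (a + b) ≤ f a + f b := fun a b hab =>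
    diversity_fn_add_le htri hδ (by omega)
  exact ⟨le_envelope hN hk0.ne' fun j hj =>
      le_mul_one_add_div_of_subadditive hmono hsub hj (hfnn j (mem_Icc.mp hj).2) k hk,
    envelope_le_two_mul (mem_Icc.mpr ⟨hk0, hk⟩) (hfnn k hk)⟩

/-- For a symmetric diversity `δ(A) = f(|A|−1)` on an `n`-point set, there are
nonnegative `λ_i` with `f(k) ≤ Σ_i λ_i·min(i,k) ≤ 2f(k)` for all `k ≤ n−1`. -/
theorem stmt_10 {X : Type*} [DecidableEq X] [Fintype X] (n : ℕ) (hn : 1 < n)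
    (hcard : Fintype.card X = n) (δ : Finset X → ℝ) (f : ℕ → ℝ)
    (hpos : ∀ A : Finset X, 0 ≤ δ A)
    (hzero : ∀ A : Finset X, δ A = 0 ↔ A.card ≤ 1)
    (htri : ∀ A B C : Finset X, B.Nonempty → δ (A ∪ C) ≤ δ (A ∪ B) + δ (B ∪ C))
    (hδ : ∀ A : Finset X, A.Nonempty → δ A = f (A.card - 1)) :
    ∃ lam : ℕ → ℝ,
      (∀ i, 1 ≤ i → i ≤ n - 1 → 0 ≤ lam i) ∧
      (∀ k, k ≤ n - 1 →
        f k ≤ ∑ i ∈ Finset.Icc 1 (n - 1), lam i * min i k ∧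
        ∑ i ∈ Finset.Icc 1 (n - 1), lam i * min i k ≤ 2 * f k) :=
  stmt_10_general n hn hcard δ f hzero htri hδ
end

section
/- Let (X, δ) be a finite symmetric diversity with |X| = n and δ(A) = f(|A| − 1). Suppose there exist nonnegative λ_1, …, λ_{n−1} such that f(k) = Σ_{ℓ=1}^{n−1} λ_ℓ·(C(n,ℓ) − C(n−k−1, n−ℓ) − C(n−k−1, ℓ)) for all k = 1, …, n−1. Then δ is a nonnegative linear combination of split diversities: δ(A) = Σ_{B ⊆ X} w_B·δ_B(A) with w_B = λ_{|B|} ≥ 0, where δ_B(A) = 1 if A ∩ B and A \ B are both nonempty and 0 otherwise. -/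
/-! For nonempty `A`, an `ℓ`-subset `B` fails to split `A` exactly when it is disjoint from `A`
(`C(n - |A|, ℓ)` choices) or contains `A` (its complement is an `(n - ℓ)`-subset of `Aᶜ`,
`C(n - |A|, n - ℓ)` choices). Grouping the splits by `|B| = ℓ`, the weighted sum therefore
evaluates at `A` to the given formula for `f (|A| - 1)`; sets with `|A| ≤ 1` are split by nothing. -/

open Finset

namespace Finset

variable {X : Type*} [DecidableEq X]

lemma not_separates_of_card_le_one {A : Finset X} (hA : #A ≤ 1) (B : Finset X) :
    ¬((A ∩ B).Nonempty ∧ (A \ B).Nonempty) := by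
  rintro ⟨⟨x, hx⟩, ⟨y, hy⟩⟩
  rw [mem_inter] at hx
  rw [mem_sdiff] at hy
  have hxy : x ≠ y := fun h => hy.2 (h ▸ hx.2)
  exact absurd (one_lt_card.mpr ⟨x, hx.1, y, hy.1, hxy⟩) (by omega)

variable [Fintype X]

lemma filter_disjoint_powersetCard_univ (A : Finset X) (j : ℕ) :
    {B ∈ powersetCard j (univ : Finset X) | Disjoint A B} = powersetCard j Aᶜ := by
  ext B
  simp [mem_powersetCard, subset_compl_iff_disjoint_left, and_comm]

lemma card_filter_superset_powersetCard_univ (A : Finset X) {j : ℕ} (hj : j ≤ Fintype.card X) :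
    #{B ∈ powersetCard j univ | A ⊆ B} = (#Aᶜ).choose (Fintype.card X - j) := by
  rw [← card_powersetCard]
  refine card_nbij' compl compl ?_ ?_ (fun B _ => compl_compl B) (fun B _ => compl_compl B)
  · intro B hB
    simp only [mem_coe, mem_filter, mem_powersetCard, subset_univ, true_and] at hB ⊢
    exact ⟨compl_subset_compl.mpr hB.2, by rw [card_compl, hB.1]⟩
  · intro B hB
    simp only [mem_coe, mem_filter, mem_powersetCard, subset_univ, true_and] at hB ⊢
    exact ⟨by rw [card_compl, hB.2]; omega, subset_compl_comm.mp hB.1⟩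

lemma card_filter_separates_powersetCard_univ_add {A : Finset X} (hA : A.Nonempty) {j : ℕ}
    (hj : j ≤ Fintype.card X) :
    #{B ∈ powersetCard j univ | (A ∩ B).Nonempty ∧ (A \ B).Nonempty}
        + (#Aᶜ).choose j + (#Aᶜ).choose (Fintype.card X - j) = (Fintype.card X).choose j := by
  set S := powersetCard j (univ : Finset X)
  have hsep : {B ∈ S | (A ∩ B).Nonempty ∧ (A \ B).Nonempty}
      = {B ∈ {B ∈ S | ¬Disjoint A B} | ¬A ⊆ B} := by
    simp only [filter_filter, not_disjoint_iff_nonempty_inter, sdiff_nonempty]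
  have hsup : {B ∈ {B ∈ S | ¬Disjoint A B} | A ⊆ B} = {B ∈ S | A ⊆ B} := by
    rw [filter_filter]
    exact filter_congr fun B _ => and_iff_right_of_imp fun hAB hd =>
      hA.ne_empty (disjoint_self_iff_empty A |>.mp (hd.mono_right hAB))
  have hdisj := card_filter_add_card_filter_not (s := S) (Disjoint A ·)
  have hmeet := card_filter_add_card_filter_not (s := {B ∈ S | ¬Disjoint A B}) (A ⊆ ·)
  rw [hsup, card_filter_superset_powersetCard_univ A hj] at hmeet
  rw [filter_disjoint_powersetCard_univ, card_powersetCard, card_powersetCard, card_univ] at hdisj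
  rw [hsep]
  omega

lemma sum_mul_ite_separates {R : Type*} [Semiring R] (lam : ℕ → R) (A : Finset X) :
    ∑ B : Finset X, lam #B * (if (A ∩ B).Nonempty ∧ (A \ B).Nonempty then 1 else 0)
      = ∑ j ∈ Icc 1 (Fintype.card X - 1),
          lam j * #{B ∈ powersetCard j univ | (A ∩ B).Nonempty ∧ (A \ B).Nonempty} := by
  have hcard : ∀ B ∈ ({B | (A ∩ B).Nonempty ∧ (A \ B).Nonempty} : Finset (Finset X)),
      #B ∈ Icc 1 (Fintype.card X - 1) := by
    intro B hB
    obtain ⟨⟨x, hx⟩, ⟨y, hy⟩⟩ := (mem_filter.mp hB).2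
    have hpos : 0 < #B := card_pos.mpr ⟨x, (mem_inter.mp hx).2⟩
    have hlt : #B < Fintype.card X := card_lt_univ_of_notMem (mem_sdiff.mp hy).2
    simp only [mem_Icc]
    omega
  simp_rw [mul_ite, mul_one, mul_zero]
  rw [← sum_filter, ← sum_fiberwise_of_maps_to hcard]
  refine sum_congr rfl fun j _ => ?_
  rw [sum_congr rfl fun B hB => congrArg lam (mem_filter.mp hB).2, sum_const, nsmul_eq_mul',
    powersetCard_eq_filter, powerset_univ, filter_filter, filter_filter]
  simp_rw [and_comm]

end Finset

theorem stmt_14_general {X : Type*} [DecidableEq X] [Fintype X] (n : ℕ)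
    (hcard : Fintype.card X = n) (δ : Finset X → ℝ) (f : ℕ → ℝ) (lam : ℕ → ℝ)
    (hzero : ∀ A : Finset X, δ A = 0 ↔ A.card ≤ 1)
    (hδ : ∀ A : Finset X, A.Nonempty → δ A = f (A.card - 1))
    (hf : ∀ k, 1 ≤ k → k ≤ n - 1 →
      f k = ∑ ℓ ∈ Finset.Icc 1 (n - 1), lam ℓ *
        ((Nat.choose n ℓ : ℝ) - Nat.choose (n - k - 1) (n - ℓ) -
          Nat.choose (n - k - 1) ℓ)) :
    ∀ A : Finset X,
      δ A = ∑ B : Finset X, lam B.card *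
        (if (A ∩ B).Nonempty ∧ (A \ B).Nonempty then 1 else 0) := by
  intro A
  by_cases hA : #A ≤ 1
  · rw [(hzero A).2 hA]
    exact (sum_eq_zero fun B _ => by rw [if_neg (not_separates_of_card_le_one hA B), mul_zero]).symm
  have hAne : A.Nonempty := card_pos.mp (by omega)
  have hAn : #A ≤ n := hcard ▸ card_le_univ A
  rw [hδ A hAne, hf (#A - 1) (by omega) (by omega), sum_mul_ite_separates, hcard,
    show n - (#A - 1) - 1 = n - #A by omega]
  refine sum_congr rfl fun j hj => congrArg (lam j * ·) ?_
  have hcount := card_filter_separates_powersetCard_univ_add hAne (j := j)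
    (by have := mem_Icc.mp hj; omega)
  rw [card_compl, hcard] at hcount
  rw [← hcount]
  push_cast
  ring

/-- If a symmetric diversity's profile `f` is a nonnegative combination of the binomial
basis functions, then `δ` is a nonnegative combination of split diversities with
weights `w_B = λ_{|B|}`. -/
theorem stmt_14 {X : Type*} [DecidableEq X] [Fintype X] (n : ℕ) (hn : 1 < n)
    (hcard : Fintype.card X = n) (δ : Finset X → ℝ) (f : ℕ → ℝ) (lam : ℕ → ℝ)
    (hpos : ∀ A : Finset X, 0 ≤ δ A)
    (hzero : ∀ A : Finset X, δ A = 0 ↔ A.card ≤ 1)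
    (htri : ∀ A B C : Finset X, B.Nonempty → δ (A ∪ C) ≤ δ (A ∪ B) + δ (B ∪ C))
    (hδ : ∀ A : Finset X, A.Nonempty → δ A = f (A.card - 1))
    (hlampos : ∀ ℓ, 1 ≤ ℓ → ℓ ≤ n - 1 → 0 ≤ lam ℓ)
    (hf : ∀ k, 1 ≤ k → k ≤ n - 1 →
      f k = ∑ ℓ ∈ Finset.Icc 1 (n - 1), lam ℓ *
        ((Nat.choose n ℓ : ℝ) - Nat.choose (n - k - 1) (n - ℓ) -
          Nat.choose (n - k - 1) ℓ)) :
    ∀ A : Finset X,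
      δ A = ∑ B : Finset X, lam B.card *
        (if (A ∩ B).Nonempty ∧ (A \ B).Nonempty then 1 else 0) :=
  stmt_14_general n hcard δ f lam hzero hδ hf
end

section
/- For 1 ≤ ℓ ≤ n−1 define φ_ℓ(k) = (C(n,ℓ) − C(n−k−1, n−ℓ) − C(n−k−1, ℓ)) / (2·C(n−2, ℓ−1)). Then φ_ℓ is concave on {0, …, n−1}: φ_ℓ(k+1) − φ_ℓ(k) ≥ φ_ℓ(k+2) − φ_ℓ(k+1) for all 0 ≤ k ≤ n−3. -/
lemma aux_conv_16 (t j : ℕ) :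
    2 * Nat.choose (t + 1) j ≤ Nat.choose (t + 2) j + Nat.choose t j := by
  cases j with
  | zero => simp
  | succ s =>
    have h1 : Nat.choose (t + 2) (s + 1) =
        Nat.choose (t + 1) s + Nat.choose (t + 1) (s + 1) := Nat.choose_succ_succ _ _
    have h2 : Nat.choose (t + 1) (s + 1) =
        Nat.choose t s + Nat.choose t (s + 1) := Nat.choose_succ_succ _ _
    have h3 : Nat.choose t s ≤ Nat.choose (t + 1) s :=
      Nat.choose_le_choose _ (Nat.le_succ t)
    omega

/-- The functions `φ_ℓ` are concave on `{0,…,n−1}`: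
`φ_ℓ(k+1) − φ_ℓ(k) ≥ φ_ℓ(k+2) − φ_ℓ(k+1)` for `0 ≤ k ≤ n−3`. -/
theorem stmt_16 (n ℓ : ℕ) (hn : 3 ≤ n) (hℓ1 : 1 ≤ ℓ) (hℓ2 : ℓ ≤ n - 1)
    (φ : ℕ → ℝ)
    (hφ : ∀ k, φ k = ((Nat.choose n ℓ : ℝ) - Nat.choose (n - k - 1) (n - ℓ) -
        Nat.choose (n - k - 1) ℓ) / (2 * Nat.choose (n - 2) (ℓ - 1))) :
    ∀ k, k ≤ n - 3 → φ (k + 2) - φ (k + 1) ≤ φ (k + 1) - φ k := by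
  intro k hk
  have hpos : 0 < Nat.choose (n - 2) (ℓ - 1) := Nat.choose_pos (by omega)
  have hD : (0 : ℝ) < 2 * Nat.choose (n - 2) (ℓ - 1) := by positivity
  set t := n - k - 3 with ht
  have e0 : n - k - 1 = t + 2 := by omega
  have e1 : n - (k + 1) - 1 = t + 1 := by omega
  have e2 : n - (k + 2) - 1 = t := by omega
  rw [hφ, hφ, hφ, e0, e1, e2, div_sub_div_same, div_sub_div_same,
    div_le_div_iff_of_pos_right hD]
  have h1 := aux_conv_16 t (n - ℓ)
  have h2 := aux_conv_16 t ℓ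
  have c1 : (2 : ℝ) * Nat.choose (t + 1) (n - ℓ) ≤
      Nat.choose (t + 2) (n - ℓ) + Nat.choose t (n - ℓ) := by exact_mod_cast h1
  have c2 : (2 : ℝ) * Nat.choose (t + 1) ℓ ≤
      Nat.choose (t + 2) ℓ + Nat.choose t ℓ := by exact_mod_cast h2
  linarith
end

section
/- Let n > 1 and for 1 ≤ i ≤ n−1 let ψ_i(k) = min(i, k) and Ψ_x(k) = min(x, k) for real x > 0. If i = 1 and ℓ = ⌊n/2⌋, then (1/2)Ψ_{x(ℓ)}(k) ≤ ψ_1(k) ≤ Ψ_{x(ℓ)}(k) for all k = 0, …, n−1, where x(ℓ) = n(n−1)/(2ℓ(n−ℓ)). If i ≥ 2, then there exists ℓ ∈ {1, …, ⌊n/2⌋} such that Ψ_{x(ℓ)}(k) ≤ ψ_i(k) ≤ 2Ψ_{x(ℓ)}(k) for all k = 0, …, n−1. -/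
/-- Approximating `ψ_i(k) = min(i,k)` by `Ψ_{x(ℓ)}(k) = min(x(ℓ),k)` where
`x(ℓ) = n(n−1)/(2ℓ(n−ℓ))`. -/
theorem stmt_18 (n : ℕ) (hn : 1 < n) (x : ℕ → ℝ)
    (hx : ∀ ℓ, x ℓ = (n : ℝ) * ((n : ℝ) - 1) / (2 * ℓ * ((n : ℝ) - ℓ))) :
    (∀ k : ℕ, k ≤ n - 1 →
      (1 / 2) * min (x (n / 2)) (k : ℝ) ≤ min (1 : ℝ) (k : ℝ) ∧
      min (1 : ℝ) (k : ℝ) ≤ min (x (n / 2)) (k : ℝ)) ∧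
    (∀ i : ℕ, 2 ≤ i → i ≤ n - 1 →
      ∃ ℓ : ℕ, 1 ≤ ℓ ∧ ℓ ≤ n / 2 ∧
        ∀ k : ℕ, k ≤ n - 1 →
          min (x ℓ) (k : ℝ) ≤ min (i : ℝ) (k : ℝ) ∧
          min (i : ℝ) (k : ℝ) ≤ 2 * min (x ℓ) (k : ℝ)) := by
  classical
  have hN : (2:ℝ) ≤ (n:ℝ) := by exact_mod_cast hn
  set m := n / 2 with hm
  have hm1 : 1 ≤ m := by omega
  have hmn : 2 * m ≤ n := by omega
  -- positivity of denominator
  have hden : ∀ ℓ : ℕ, 1 ≤ ℓ → ℓ ≤ m → 0 < 2 * (ℓ:ℝ) * ((n:ℝ) - ℓ) := by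
    intro ℓ h1 h2
    have h2' : 2 * ℓ ≤ n := by omega
    have hc : ((2*ℓ : ℕ):ℝ) ≤ (n:ℝ) := Nat.cast_le.2 h2'
    push_cast at hc
    have h1' : (1:ℝ) ≤ (ℓ:ℝ) := by exact_mod_cast h1
    nlinarith
  have hA : (0:ℝ) < (n:ℝ) * ((n:ℝ) - 1) := by nlinarith
  -- value at m : between 1 and 2
  have hMcast : (2:ℝ) * (m:ℝ) ≤ (n:ℝ) := by
    have := Nat.cast_le (α := ℝ) |>.2 hmn; push_cast at this; linarith
  have hRspec : n = 2 * m + n % 2 ∧ n % 2 ≤ 1 := by omega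
  have hxm2 : x m ≤ 2 := by
    rw [hx]
    rw [div_le_iff₀ (hden m hm1 le_rfl)]
    obtain ⟨h1, h2⟩ := hRspec
    have hc : ((n:ℕ):ℝ) = 2 * (m:ℝ) + ((n % 2 : ℕ):ℝ) := by exact_mod_cast congrArg (Nat.cast (R := ℝ)) h1
    have hR0 : (0:ℝ) ≤ ((n % 2 : ℕ):ℝ) := Nat.cast_nonneg _
    have hR1 : ((n % 2 : ℕ):ℝ) ≤ 1 := by exact_mod_cast h2
    have hM1 : (1:ℝ) ≤ (m:ℝ) := by exact_mod_cast hm1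
    nlinarith [mul_nonneg hR0 (sub_nonneg.2 hR1)]
  have hxm1 : (1:ℝ) ≤ x m := by
    rw [hx]
    rw [le_div_iff₀ (hden m hm1 le_rfl)]
    obtain ⟨h1, h2⟩ := hRspec
    have hc : ((n:ℕ):ℝ) = 2 * (m:ℝ) + ((n % 2 : ℕ):ℝ) := by exact_mod_cast congrArg (Nat.cast (R := ℝ)) h1
    have hR0 : (0:ℝ) ≤ ((n % 2 : ℕ):ℝ) := Nat.cast_nonneg _
    have hM1 : (1:ℝ) ≤ (m:ℝ) := by exact_mod_cast hm1
    nlinarith [mul_nonneg (sub_nonneg.2 hM1) hR0, mul_nonneg (sub_nonneg.2 hM1) (sub_nonneg.2 hM1), mul_self_nonneg ((n % 2 : ℕ):ℝ)]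
  -- halving lemma
  have hhalf : ∀ ℓ : ℕ, 1 ≤ ℓ → ℓ + 1 ≤ m → x ℓ ≤ 2 * x (ℓ + 1) := by
    intro ℓ h1 h2
    have hd1 := hden ℓ h1 (by omega)
    have hd2 := hden (ℓ+1) (by omega) h2
    rw [hx ℓ, hx (ℓ+1)]
    rw [div_le_iff₀ hd1]
    rw [mul_comm (2:ℝ), div_mul_eq_mul_div, div_mul_eq_mul_div, le_div_iff₀ hd2]
    have h1' : (1:ℝ) ≤ (ℓ:ℝ) := by exact_mod_cast h1
    have h2' : 2 * (ℓ+1) ≤ n := by omega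
    have hc : ((2*(ℓ+1) : ℕ):ℝ) ≤ (n:ℝ) := Nat.cast_le.2 h2'
    push_cast at hc ⊢
    nlinarith [mul_nonneg (sub_nonneg.2 h1') (by linarith : (0:ℝ) ≤ (n:ℝ) - (ℓ:ℝ)), hA.le]
  constructor
  · intro k hk
    have hk0 : (0:ℝ) ≤ (k:ℝ) := Nat.cast_nonneg k
    have h1 := min_le_left (x m) (k:ℝ)
    have h2 := min_le_right (x m) (k:ℝ)
    constructor
    · apply le_min <;> linarith
    · exact min_le_min hxm1 le_rfl
  · intro i h2i hin
    have h2i' : (2:ℝ) ≤ (i:ℝ) := by exact_mod_cast h2i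
    have hiN : (i:ℝ) ≤ (n:ℝ) := by
      have : i ≤ n := by omega
      exact_mod_cast this
    have hex : ∃ ℓ, (1 ≤ ℓ ∧ ℓ ≤ m) ∧ x ℓ ≤ (i:ℝ) :=
      ⟨m, ⟨hm1, le_rfl⟩, by linarith⟩
    obtain ⟨L, ⟨⟨hL1, hLm⟩, hxLi⟩, hLmin⟩ :
        ∃ L, ((1 ≤ L ∧ L ≤ m) ∧ x L ≤ (i:ℝ)) ∧
          ∀ j, j < L → ¬((1 ≤ j ∧ j ≤ m) ∧ x j ≤ (i:ℝ)) :=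
      ⟨Nat.find hex, Nat.find_spec hex, fun j hj => Nat.find_min hex hj⟩
    have hix : (i:ℝ) ≤ 2 * x L := by
      rcases eq_or_lt_of_le hL1 with h | h
      · -- L = 1 : x 1 = n/2
        rw [← h]
        rw [hx]
        push_cast
        rw [show (2:ℝ) * 1 * ((n:ℝ) - 1) = 2 * ((n:ℝ)-1) by ring]
        have hne : (n:ℝ) - 1 > 0 := by linarith
        rw [show (n:ℝ) * ((n:ℝ) - 1) / (2 * ((n:ℝ)-1)) = (n:ℝ)/2 by
          field_simp]
        linarith
      · -- L ≥ 2
        have hL2 : 2 ≤ L := h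
        obtain ⟨ℓ, rfl⟩ : ∃ ℓ, L = ℓ + 1 := ⟨L - 1, by omega⟩
        have hmin := hLmin ℓ (by omega)
        push_neg at hmin
        have hgt : (i:ℝ) < x ℓ := hmin ⟨by omega, by omega⟩
        have := hhalf ℓ (by omega) hLm
        linarith
    refine ⟨L, hL1, hLm, ?_⟩
    intro k hk
    have hk0 : (0:ℝ) ≤ (k:ℝ) := Nat.cast_nonneg k
    refine ⟨min_le_min hxLi le_rfl, ?_⟩
    rcases le_total (x L) (k:ℝ) with hcase | hcase
    · rw [min_eq_left hcase]
      have := min_le_left (i:ℝ) (k:ℝ); linarith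
    · rw [min_eq_right hcase]
      have := min_le_right (i:ℝ) (k:ℝ); linarith
end

section
/- For all real z ∈ (0, 1), with exponent e(z) = 1/(2.2·z(1−z)) + 1, we have z^{e(z)} + (1−z)^{e(z)} < 0.8; equivalently 1 − z^{e(z)} − (1−z)^{e(z)} > 0.2. -/
lemma aux_half (z : ℝ) (h0 : 0 < z) (h2 : z ≤ 1/2) :
    z ^ (1 / (2.2 * z * (1 - z)) + 1) + (1 - z) ^ (1 / (2.2 * z * (1 - z)) + 1)
        < 0.8 := by
  set E : ℝ := 1 / (2.2 * z * (1 - z)) + 1 with hE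
  have hz1 : (0:ℝ) < 1 - z := by linarith
  have hd : (0:ℝ) < 2.2 * z * (1 - z) := by positivity
  have hE31 : (31:ℝ)/11 ≤ E := by
    have hq : 2.2 * z * (1 - z) ≤ 11/20 := by nlinarith [sq_nonneg (z - 1/2)]
    have h1 : (20:ℝ)/11 ≤ 1 / (2.2 * z * (1 - z)) := by
      rw [le_div_iff₀ hd]; linarith
    linarith
  -- first term
  have hf1 : z ^ E ≤ ((1:ℝ)/2) ^ ((31:ℝ)/11) := by
    calc z ^ E ≤ z ^ ((31:ℝ)/11) :=
          Real.rpow_le_rpow_of_exponent_ge h0 (by linarith) hE31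
      _ ≤ ((1:ℝ)/2) ^ ((31:ℝ)/11) := Real.rpow_le_rpow h0.le h2 (by norm_num)
  have hhalf : ((1:ℝ)/2) ^ ((31:ℝ)/11) < 0.145 := by
    by_contra h
    push_neg at h
    have hpow : (0.145:ℝ)^(11:ℕ) ≤ (((1:ℝ)/2) ^ ((31:ℝ)/11))^(11:ℕ) :=
      pow_le_pow_left₀ (by norm_num) h 11
    rw [← Real.rpow_natCast (((1:ℝ)/2) ^ ((31:ℝ)/11)) 11,
        ← Real.rpow_mul (by norm_num : (0:ℝ) ≤ 1/2)] at hpow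
    have : ((31:ℝ)/11) * (11:ℕ) = ((31:ℕ) : ℝ) := by push_cast; ring
    rw [this, Real.rpow_natCast] at hpow
    norm_num at hpow
  -- second term
  have hf2 : (1 - z) ^ E ≤ Real.exp (-(5/11)) := by
    rw [Real.rpow_def_of_pos hz1]
    apply Real.exp_le_exp.mpr
    have hlog : Real.log (1 - z) ≤ -z := by
      have := Real.log_le_sub_one_of_pos hz1; linarith
    have hlogneg : Real.log (1 - z) < 0 := Real.log_neg hz1 (by linarith)
    have hE2 : 1 / (2.2 * z) ≤ E := by
      have h3 : 2.2 * z * (1 - z) ≤ 2.2 * z := by nlinarith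
      have h4 : 1 / (2.2 * z) ≤ 1 / (2.2 * z * (1 - z)) :=
        one_div_le_one_div_of_le hd h3
      linarith
    calc Real.log (1 - z) * E ≤ Real.log (1 - z) * (1 / (2.2 * z)) := by
          nlinarith
      _ ≤ (-z) * (1 / (2.2 * z)) := by
          apply mul_le_mul_of_nonneg_right hlog (by positivity)
      _ = -(5/11) := by field_simp; ring
  have hexp : Real.exp (-(5/11:ℝ)) ≤ ((88:ℝ)/93)^(8:ℕ) := by
    have hbase : ((93:ℝ)/88)^(8:ℕ) ≤ Real.exp (5/11) := by
      have h1 : (5:ℝ)/88 + 1 ≤ Real.exp (5/88) := Real.add_one_le_exp _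
      have h2 : ((93:ℝ)/88)^(8:ℕ) ≤ (Real.exp (5/88))^(8:ℕ) := by
        apply pow_le_pow_left₀ (by norm_num)
        linarith
      have h3 : (Real.exp (5/88))^(8:ℕ) = Real.exp (5/11) := by
        rw [← Real.exp_nat_mul]; norm_num
      linarith
    rw [Real.exp_neg]
    have h93 : (0:ℝ) < ((93:ℝ)/88)^(8:ℕ) := by positivity
    calc (Real.exp (5/11))⁻¹ ≤ (((93:ℝ)/88)^(8:ℕ))⁻¹ := by
          apply inv_anti₀ h93 hbase
      _ = ((88:ℝ)/93)^(8:ℕ) := by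
          rw [← inv_pow]; norm_num
  have hfin : (0.145:ℝ) + ((88:ℝ)/93)^(8:ℕ) < 0.8 := by norm_num
  linarith

/-- For `z ∈ (0,1)` and exponent `e(z) = 1/(2.2·z(1−z)) + 1`,
`z^{e(z)} + (1−z)^{e(z)} < 0.8`, equivalently `1 − z^{e(z)} − (1−z)^{e(z)} > 0.2`. -/
theorem stmt_19 :
    ∀ z : ℝ, 0 < z → z < 1 →
      z ^ (1 / (2.2 * z * (1 - z)) + 1) + (1 - z) ^ (1 / (2.2 * z * (1 - z)) + 1)
          < 0.8 ∧
      (0.2 : ℝ) < 1 - z ^ (1 / (2.2 * z * (1 - z)) + 1)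
          - (1 - z) ^ (1 / (2.2 * z * (1 - z)) + 1) := by
  intro z hz0 hz1
  have key : z ^ (1 / (2.2 * z * (1 - z)) + 1) + (1 - z) ^ (1 / (2.2 * z * (1 - z)) + 1)
      < 0.8 := by
    rcases le_or_gt z (1/2) with h | h
    · exact aux_half z hz0 h
    · have h1 : (0:ℝ) < 1 - z := by linarith
      have h2 : 1 - z ≤ 1/2 := by linarith
      have := aux_half (1 - z) h1 h2
      have he : 2.2 * (1 - z) * (1 - (1 - z)) = 2.2 * z * (1 - z) := by ring
      rw [he, show (1 - (1 - z) : ℝ) = z by ring] at this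
      linarith
  exact ⟨key, by linarith⟩
end
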